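/- Let a_1,...,a_m be real numbers (m ≥ 2) with ∑ a_i = 0 and ∑ a_i² = b² with b > 0. Equality ∑ a_i³ = ((m-2)/√(m(m-1))) b³ holds if and only if (m-1) of the a_i's are non-positive and equal to each other. -/

import Mathlib

/-! With `c = b / √(m(m-1))` one has the identity
`∑ (aᵢ + c)² (aᵢ - (m-1)c) = ∑ aᵢ³ - (m-2)/√(m(m-1)) b³`, and Cauchy–Schwarz on the
coordinates other than `aᵢ` gives `aᵢ ≤ (m-1)c`, so every summand on the left is `≤ 0`.
Equality therefore forces each `aᵢ ∈ {-c, (m-1)c}`, and `∑ aᵢ = 0` leaves exactly one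
`aᵢ` equal to `(m-1)c`. -/

open Finset

section ZeroSum

variable {ι : Type*} [Fintype ι]

lemma sum_eq_add_mul_of_forall_ne_eq {f : ι → ℝ} {i₀ : ι} {v : ℝ} (hv : ∀ j ≠ i₀, f j = v) :
    ∑ j, f j = f i₀ + (Fintype.card ι - 1) * v := by
  classical
  rw [← add_sum_erase univ f (mem_univ i₀), sum_congr rfl fun j hj => hv j (ne_of_mem_erase hj),
    sum_const, nsmul_eq_mul, cast_card_erase_of_mem (mem_univ i₀), card_univ]

variable {a : ι → ℝ}

lemma card_mul_sq_le_of_sum_eq_zero (hsum : ∑ j, a j = 0) (i : ι) :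
    Fintype.card ι * a i ^ 2 ≤ (Fintype.card ι - 1) * ∑ j, a j ^ 2 := by
  classical
  have hcs := sq_sum_le_card_mul_sum_sq (s := univ.erase i) (f := a)
  rw [cast_card_erase_of_mem (mem_univ i), card_univ] at hcs
  have hrest : ∑ j ∈ univ.erase i, a j = -a i := by
    linarith [add_sum_erase univ a (mem_univ i)]
  rw [hrest, neg_sq] at hcs
  rw [← add_sum_erase univ (fun j => a j ^ 2) (mem_univ i)]
  linarith

lemma sum_add_sq_mul_sub (hsum : ∑ j, a j = 0) (c d : ℝ) :
    ∑ j, (a j + c) ^ 2 * (a j - d) =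
      ∑ j, a j ^ 3 + (2 * c - d) * ∑ j, a j ^ 2 - Fintype.card ι * c ^ 2 * d := by
  have hexpand : ∀ j, (a j + c) ^ 2 * (a j - d) =
      a j ^ 3 + (2 * c - d) * a j ^ 2 + (c ^ 2 - 2 * c * d) * a j - c ^ 2 * d := fun j => by ring
  simp only [hexpand, sum_sub_distrib, sum_add_distrib, ← mul_sum, hsum, sum_const, card_univ,
    nsmul_eq_mul]
  ring

lemma le_sub_one_mul_of_sum_sq_eq (hsum : ∑ j, a j = 0) {c : ℝ} (hc : 0 ≤ c)
    (hsq : ∑ j, a j ^ 2 = Fintype.card ι * (Fintype.card ι - 1) * c ^ 2) (i : ι) :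
    a i ≤ (Fintype.card ι - 1) * c := by
  have hn : (1 : ℝ) ≤ Fintype.card ι := by exact_mod_cast Fintype.card_pos_iff.2 ⟨i⟩
  have hbound := card_mul_sq_le_of_sum_eq_zero hsum i
  rw [hsq] at hbound
  have hsq_le : a i ^ 2 ≤ ((Fintype.card ι - 1) * c) ^ 2 := by
    refine le_of_mul_le_mul_left ?_ (by linarith : (0 : ℝ) < Fintype.card ι)
    linarith
  exact le_of_abs_le (abs_le_of_sq_le_sq hsq_le (by positivity))

lemma sum_pow_three_eq_iff (hsum : ∑ j, a j = 0) {c : ℝ} (hc : 0 ≤ c)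
    (hsq : ∑ j, a j ^ 2 = Fintype.card ι * (Fintype.card ι - 1) * c ^ 2) :
    ∑ j, a j ^ 3 = (Fintype.card ι - 2) * (Fintype.card ι * (Fintype.card ι - 1)) * c ^ 3 ↔
      ∀ i, a i = -c ∨ a i = (Fintype.card ι - 1) * c := by
  have hid := sum_add_sq_mul_sub hsum c ((Fintype.card ι - 1) * c)
  rw [hsq] at hid
  have hterm_nonpos : ∀ i ∈ univ, (a i + c) ^ 2 * (a i - (Fintype.card ι - 1) * c) ≤ 0 :=
    fun i _ => mul_nonpos_of_nonneg_of_nonpos (sq_nonneg _)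
      (sub_nonpos.2 (le_sub_one_mul_of_sum_sq_eq hsum hc hsq i))
  calc _ ↔ ∑ j, (a j + c) ^ 2 * (a j - (Fintype.card ι - 1) * c) = 0 := by
        constructor <;> intro h <;> linarith
    _ ↔ _ := by
      simp only [sum_eq_zero_iff_of_nonpos hterm_nonpos, mem_univ, true_implies, mul_eq_zero,
        pow_eq_zero_iff two_ne_zero, add_eq_zero_iff_eq_neg, sub_eq_zero]

lemma forall_eq_or_eq_iff_exists_forall_ne_eq [Nonempty ι] (hsum : ∑ j, a j = 0) {c : ℝ}
    (hc : c ≠ 0) :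
    (∀ i, a i = -c ∨ a i = (Fintype.card ι - 1) * c) ↔ ∃ i₀, ∀ j ≠ i₀, a j = -c := by
  classical
  constructor
  · intro h
    set S := univ.filter fun i => a i ≠ -c
    have hshift : ∀ i, a i + c = if i ∈ S then Fintype.card ι * c else 0 := by
      intro i
      by_cases hi : a i = -c
      · simp [S, hi]
      · rw [if_pos (by simp [S, hi]), (h i).resolve_left hi]
        ring
    have hshift_sum : ∑ i, (a i + c) = #S * (Fintype.card ι * c) := by
      rw [sum_congr rfl fun i _ => hshift i, sum_ite_mem, univ_inter, sum_const, nsmul_eq_mul]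
    have hshift_total : ∑ i, (a i + c) = Fintype.card ι * c := by
      rw [sum_add_distrib, hsum, sum_const, card_univ, nsmul_eq_mul, zero_add]
    have hn : (Fintype.card ι : ℝ) ≠ 0 := by exact_mod_cast Fintype.card_ne_zero
    have hS_card : #S = 1 := by
      rw [hshift_sum, mul_eq_right₀ (mul_ne_zero hn hc)] at hshift_total
      exact_mod_cast hshift_total
    obtain ⟨i₀, hS⟩ := card_eq_one.1 hS_card
    refine ⟨i₀, fun j hj => ?_⟩
    have hjS : j ∉ S := by simp [hS, hj]
    simpa [S] using hjS
  · rintro ⟨i₀, h⟩ i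
    by_cases hi : i = i₀
    · subst hi
      right
      linarith [sum_eq_add_mul_of_forall_ne_eq h, hsum]
    · exact Or.inl (h i hi)

lemma eq_neg_of_forall_ne_eq (hsum : ∑ j, a j = 0) {c : ℝ} (hc : 0 ≤ c)
    (hsq : ∑ j, a j ^ 2 = Fintype.card ι * (Fintype.card ι - 1) * c ^ 2)
    (hn : 2 ≤ Fintype.card ι) {i₀ : ι} {v : ℝ} (hv : v ≤ 0) (h : ∀ j ≠ i₀, a j = v) :
    v = -c := by
  have hn' : (2 : ℝ) ≤ Fintype.card ι := by exact_mod_cast hn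
  have hai₀ : a i₀ = -((Fintype.card ι - 1) * v) := by
    linarith [sum_eq_add_mul_of_forall_ne_eq h, hsum]
  have hsq' := sum_eq_add_mul_of_forall_ne_eq (f := fun j => a j ^ 2) (i₀ := i₀) (v := v ^ 2)
    fun j hj => by rw [h j hj]
  rw [hsq, hai₀] at hsq'
  have : v ^ 2 = c ^ 2 := by
    have hpos : (0 : ℝ) < Fintype.card ι * (Fintype.card ι - 1) := by nlinarith
    refine mul_left_cancel₀ hpos.ne' ?_
    linear_combination -hsq'
  nlinarith

end ZeroSum

/-- Equality case of the Okumura-type lemma: with `∑ a i = 0`, `∑ (a i)² = b²`, `b > 0`,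
equality `∑ (a i)³ = ((m-2)/√(m(m-1))) b³` holds iff `m-1` of the `a i`'s are
non-positive and equal to each other. -/
theorem okumura_equality (m : ℕ) (hm : 2 ≤ m) (a : Fin m → ℝ) (b : ℝ) (hb : 0 < b)
    (hsum : ∑ i, a i = 0) (hsq : ∑ i, (a i) ^ 2 = b ^ 2) :
    ∑ i, (a i) ^ 3 = (((m : ℝ) - 2) / Real.sqrt ((m : ℝ) * ((m : ℝ) - 1))) * b ^ 3 ↔
      ∃ i₀ : Fin m, ∃ v : ℝ, v ≤ 0 ∧ ∀ j : Fin m, j ≠ i₀ → a j = v := by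
  have hm' : (2 : ℝ) ≤ m := by exact_mod_cast hm
  have hM : 0 < (m : ℝ) * (m - 1) := by nlinarith
  have : Nonempty (Fin m) := ⟨⟨0, by omega⟩⟩
  set c := b / √((m : ℝ) * (m - 1))
  have hc : 0 < c := div_pos hb (Real.sqrt_pos.2 hM)
  have hb_eq : b = √((m : ℝ) * (m - 1)) * c := (mul_div_cancel₀ b (Real.sqrt_pos.2 hM).ne').symm
  have hsq_c : ∑ i, a i ^ 2 = Fintype.card (Fin m) * (Fintype.card (Fin m) - 1) * c ^ 2 := by
    rw [hsq, hb_eq, mul_pow, Real.sq_sqrt hM.le, Fintype.card_fin]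
  have hrhs : ((m : ℝ) - 2) / √((m : ℝ) * (m - 1)) * b ^ 3 =
      (Fintype.card (Fin m) - 2) * (Fintype.card (Fin m) * (Fintype.card (Fin m) - 1)) * c ^ 3 := by
    rw [Fintype.card_fin, hb_eq]
    field_simp
    rw [Real.sq_sqrt hM.le]
    ring
  rw [hrhs, sum_pow_three_eq_iff hsum hc.le hsq_c,
    forall_eq_or_eq_iff_exists_forall_ne_eq hsum hc.ne']
  constructor
  · rintro ⟨i₀, h⟩
    exact ⟨i₀, -c, by linarith, h⟩
  · rintro ⟨i₀, v, hv, h⟩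
    obtain rfl := eq_neg_of_forall_ne_eq hsum hc.le hsq_c (by simpa) hv h
    exact ⟨i₀, h⟩
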